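/- Let (A, f) be a partial injection structure and a ∈ A. Then the orbit of a is exactly one of: a k-cycle (for some k ≥ 1), a finite k-chain (for some k ≥ 1), a Z-chain, an ω-chain, or an ω*-chain. -/

import Mathlib

/-- `n`-fold iteration of a partial function. -/
def pIter {A : Type*} (f : A →. A) : ℕ → A →. A
  | 0 => fun a => Part.some a
  | n + 1 => fun a => (pIter f n a).bind f

/-- The orbit of `a` under a partial function `f`. -/
def pOrbit {A : Type*} (f : A →. A) (a : A) : Set A :=
  {b | ∃ n : ℕ, b ∈ pIter f n a ∨ a ∈ pIter f n b}

/-- The range of a partial function. -/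
def pRan {A : Type*} (f : A →. A) : Set A := {y | ∃ x, y ∈ f x}

/-- `S` is a `k`-cycle: `S = {x, f(x), …, f^{k-1}(x)}` with `f^k(x) = x` and
these `k` elements pairwise distinct. -/
def IsKCycle {A : Type*} (f : A →. A) (k : ℕ) (S : Set A) : Prop :=
  1 ≤ k ∧ ∃ x ∈ S, x ∈ pIter f k x ∧
    (∀ i j, i < j → j < k → ∀ y z, y ∈ pIter f i x → z ∈ pIter f j x → y ≠ z) ∧
    S = {y | ∃ i < k, y ∈ pIter f i x}

/-- `S` is a finite `k`-chain: distinct `x₁, …, x_k` with `x₁ ∉ ran f`,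
`x_{i+1} = f(x_i)` and `x_k ∉ dom f`. -/
def IsKChain {A : Type*} (f : A →. A) (k : ℕ) (S : Set A) : Prop :=
  1 ≤ k ∧ ∃ x : Fin k → A, Function.Injective x ∧ S = Set.range x ∧
    (∀ hk : 0 < k, x ⟨0, hk⟩ ∉ pRan f) ∧
    (∀ i : Fin k, ∀ h : i.val + 1 < k, x ⟨i.val + 1, h⟩ ∈ f (x i)) ∧
    (∀ hk : 0 < k, ¬(f (x ⟨k - 1, by omega⟩)).Dom)

/-- `S` is a `Z`-chain: infinite, indexed bijectively by ℤ with `f` acting as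
successor (so `f` restricts to a bijection of `S` with no periodic point). -/
def IsZChain {A : Type*} (f : A →. A) (S : Set A) : Prop :=
  S.Infinite ∧ ∃ e : ℤ → A, Function.Injective e ∧ Set.range e = S ∧
    ∀ z : ℤ, e (z + 1) ∈ f (e z)

/-- `S` is an ω-chain: `S = {x₀, x₁, …}` with all `xᵢ` distinct,
`x₀ ∉ ran f` and `x_{i+1} = f(x_i)`. -/
def IsOmegaChain {A : Type*} (f : A →. A) (S : Set A) : Prop :=
  ∃ u : ℕ → A, Function.Injective u ∧ S = Set.range u ∧
    u 0 ∉ pRan f ∧ ∀ n : ℕ, u (n + 1) ∈ f (u n)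

/-- `S` is an ω*-chain: `S = {x₀, x₁, …}` with all `xᵢ` distinct,
`x₀ ∉ dom f` and `f(x_{i+1}) = x_i`. -/
def IsOmegaStarChain {A : Type*} (f : A →. A) (S : Set A) : Prop :=
  ∃ u : ℕ → A, Function.Injective u ∧ S = Set.range u ∧
    ¬(f (u 0)).Dom ∧ ∀ n : ℕ, u n ∈ f (u (n + 1))

/-!
If `a` is periodic, its least period gives a cycle. Otherwise call a point of the orbit outside
`pRan f` a root and one outside the domain of `f` a tip. Iterating `f` from a root sweeps out the
whole orbit, injectively because a root has no preimage; the sweep stops at a tip (a finite chain)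
or never does (an ω-chain). A tip without a root is the same situation for the inverse partial
injection `pInv f` (an ω*-chain). With neither, the forward iterates of `a` under `f` and under
`pInv f` glue to a ℤ-indexed path, injective because `a` is not periodic (a ℤ-chain).

The five types exclude each other: finiteness of the orbit, the existence of a root and the
existence of a tip take a different combination of values on each.
-/

def IsPartialInjection {A : Type*} (f : A →. A) : Prop :=
  ∀ x y z : A, z ∈ f x → z ∈ f y → x = y

section Iterate

variable {A : Type*} {g : A →. A} {a b c x y : A} {m n : ℕ}

@[simp]
theorem mem_pIter_zero : b ∈ pIter g 0 a ↔ b = a := Part.mem_some_iff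

theorem mem_pIter_succ : b ∈ pIter g (n + 1) a ↔ ∃ c ∈ pIter g n a, b ∈ g c :=
  Part.mem_bind_iff

theorem pIter_get_succ_mem (h : (pIter g (n + 1) a).Dom) :
    (pIter g (n + 1) a).get h ∈ g ((pIter g n a).get h.1) :=
  Part.get_mem h.2

theorem mem_pIter_add : b ∈ pIter g (m + n) a ↔ ∃ c ∈ pIter g m a, b ∈ pIter g n c := by
  induction n generalizing b with
  | zero => simp
  | succ n ih =>
    simp only [← add_assoc, mem_pIter_succ, ih]
    exact ⟨fun ⟨d, ⟨c, hc, hd⟩, hb⟩ => ⟨c, hc, d, hd, hb⟩,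
      fun ⟨c, hc, d, hd, hb⟩ => ⟨d, ⟨c, hc, hd⟩, hb⟩⟩

theorem mem_pIter_succ' : b ∈ pIter g (n + 1) a ↔ ∃ c ∈ g a, b ∈ pIter g n c := by
  rw [add_comm, mem_pIter_add]
  simp [mem_pIter_succ]

theorem mem_pRan_of_mem_pIter (hb : b ∈ pIter g n a) (hn : 0 < n) : b ∈ pRan g := by
  obtain ⟨n, rfl⟩ := Nat.exists_eq_add_of_lt hn
  obtain ⟨c, -, hbc⟩ := mem_pIter_succ.1 hb
  exact ⟨c, hbc⟩

theorem dom_of_mem_pIter (hb : b ∈ pIter g n a) (hn : 0 < n) : (g a).Dom := by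
  obtain ⟨n, rfl⟩ := Nat.exists_eq_add_of_lt hn
  obtain ⟨c, hc, -⟩ := mem_pIter_succ'.1 (by simpa using hb)
  exact Part.dom_iff_mem.2 ⟨c, hc⟩

theorem pIter_dom_of_le (h : (pIter g n a).Dom) (hmn : m ≤ n) : (pIter g m a).Dom := by
  obtain ⟨k, rfl⟩ := Nat.exists_eq_add_of_le hmn
  obtain ⟨c, hc, -⟩ := mem_pIter_add.1 (Part.get_mem h)
  exact Part.dom_iff_mem.2 ⟨c, hc⟩

theorem mem_pIter_sub_of_mem (hx : x ∈ pIter g m a) (hy : y ∈ pIter g n a) (hmn : m ≤ n) :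
    y ∈ pIter g (n - m) x := by
  obtain ⟨c, hc, hyc⟩ := mem_pIter_add.1 (show y ∈ pIter g (m + (n - m)) a by
    rwa [Nat.add_sub_cancel' hmn])
  rwa [Part.mem_unique hx hc]

theorem self_mem_pIter_mul (ha : a ∈ pIter g n a) (t : ℕ) : a ∈ pIter g (n * t) a := by
  induction t with
  | zero => simp
  | succ t ih => exact mem_pIter_add.2 ⟨a, ih, ha⟩

theorem mem_pIter_mod (ha : a ∈ pIter g n a) (hb : b ∈ pIter g m a) :
    b ∈ pIter g (m % n) a := by
  rw [← Nat.div_add_mod m n] at hb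
  obtain ⟨c, hc, hbc⟩ := mem_pIter_add.1 hb
  rwa [Part.mem_unique hc (self_mem_pIter_mul ha _)] at hbc

theorem le_of_mem_pIter_of_not_dom {t : A} (ht : t ∈ pIter g m c) (htd : ¬(g t).Dom)
    (hb : b ∈ pIter g n c) : n ≤ m := by
  by_contra h
  exact htd (dom_of_mem_pIter (mem_pIter_sub_of_mem ht hb (by omega)) (by omega))

theorem mem_pOrbit_of_mem_pIter (ha : a ∈ pIter g m c) (hb : b ∈ pIter g n c) :
    b ∈ pOrbit g a := by
  rcases le_total m n with h | h
  · exact ⟨n - m, .inl (mem_pIter_sub_of_mem ha hb h)⟩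
  · exact ⟨m - n, .inr (mem_pIter_sub_of_mem hb ha h)⟩

theorem exists_not_dom_or_forall_pIter_dom (g : A →. A) (a : A) :
    (∃ t n, t ∈ pIter g n a ∧ ¬(g t).Dom) ∨ ∀ n, (pIter g n a).Dom := by
  refine or_iff_not_imp_left.2 fun htip n => ?_
  induction n with
  | zero => trivial
  | succ n ih =>
    by_contra hn
    exact htip ⟨_, n, Part.get_mem ih, fun ht => hn ⟨ih, ht⟩⟩

theorem forall_pIter_dom_of_mem (ha : a ∈ pIter g m c) (h : ∀ n, (pIter g n a).Dom) (n : ℕ) :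
    (pIter g n c).Dom :=
  pIter_dom_of_le (mem_pIter_add.2 ⟨a, ha, Part.get_mem (h n)⟩).1 (Nat.le_add_left n m)

end Iterate

section PartialInjection

variable {A : Type*} {g : A →. A} (hg : IsPartialInjection g) {a b c t x y : A} {i j m n : ℕ}
include hg

theorem IsPartialInjection.eq_of_mem_pIter (hx : b ∈ pIter g n x) (hy : b ∈ pIter g n y) :
    x = y := by
  induction n generalizing b with
  | zero => simp_all
  | succ n ih =>
    obtain ⟨c, hc, hbc⟩ := mem_pIter_succ.1 hx
    obtain ⟨d, hd, hbd⟩ := mem_pIter_succ.1 hy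
    exact ih hc (hg _ _ _ hbd hbc ▸ hd)

theorem IsPartialInjection.mem_pIter_sub_of_mem (hx : a ∈ pIter g m x) (hy : a ∈ pIter g n y)
    (hmn : m ≤ n) : x ∈ pIter g (n - m) y := by
  obtain ⟨c, hc, hac⟩ := mem_pIter_add.1 (show a ∈ pIter g (n - m + m) y by
    rwa [Nat.sub_add_cancel hmn])
  rwa [hg.eq_of_mem_pIter hx hac]

theorem IsPartialInjection.eq_of_mem_pIter_of_not_mem_pRan (hc : c ∉ pRan g)
    (hi : y ∈ pIter g i c) (hj : y ∈ pIter g j c) : i = j := by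
  by_contra hij
  wlog h : i < j generalizing i j
  · exact this hj hi (Ne.symm hij) (by omega)
  exact hc (mem_pRan_of_mem_pIter (hg.mem_pIter_sub_of_mem hi hj h.le) (by omega))

theorem IsPartialInjection.pOrbit_eq_of_not_mem_pRan (hc : c ∉ pRan g)
    (ha : a ∈ pIter g m c) : pOrbit g a = {b | ∃ n, b ∈ pIter g n c} := by
  ext b
  refine ⟨?_, fun ⟨n, hb⟩ => mem_pOrbit_of_mem_pIter ha hb⟩
  rintro ⟨n, hb | hb⟩
  · exact ⟨m + n, mem_pIter_add.2 ⟨a, ha, hb⟩⟩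
  rcases le_or_gt n m with h | h
  · exact ⟨m - n, hg.mem_pIter_sub_of_mem hb ha h⟩
  · exact (hc (mem_pRan_of_mem_pIter (hg.mem_pIter_sub_of_mem ha hb h.le) (by omega))).elim

theorem IsPartialInjection.isKCycle_pOrbit (hper : ∃ k, 0 < k ∧ a ∈ pIter g k a) :
    ∃ k, IsKCycle g k (pOrbit g a) := by
  classical
  obtain ⟨hk, hak⟩ := Nat.find_spec hper
  refine ⟨Nat.find hper, hk, a, ⟨0, .inl (mem_pIter_zero.2 rfl)⟩, hak, ?_, ?_⟩
  · rintro i j hij hjk y _ hy hz rfl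
    exact Nat.find_min hper (show j - i < Nat.find hper by omega)
      ⟨by omega, hg.mem_pIter_sub_of_mem hy hz hij.le⟩
  · ext b
    refine ⟨?_, fun ⟨i, _, hi⟩ => ⟨i, .inl hi⟩⟩
    rintro ⟨n, hb | hb⟩
    · exact ⟨_, Nat.mod_lt _ hk, mem_pIter_mod hak hb⟩
    · have := hg.mem_pIter_sub_of_mem hb (self_mem_pIter_mul hak n)
        (Nat.le_mul_of_pos_left n hk)
      exact ⟨_, Nat.mod_lt _ hk, mem_pIter_mod hak this⟩

theorem IsPartialInjection.isKChain_pOrbit (hc : c ∉ pRan g) (ht : t ∈ pIter g m c)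
    (htd : ¬(g t).Dom) (ha : a ∈ pIter g j c) : IsKChain g (m + 1) (pOrbit g a) := by
  have hdom : ∀ i : Fin (m + 1), (pIter g i c).Dom := fun i =>
    pIter_dom_of_le (Part.dom_iff_mem.2 ⟨t, ht⟩) (Nat.lt_succ_iff.1 i.2)
  refine ⟨by omega, fun i => (pIter g i c).get (hdom i), fun i i' h => Fin.ext ?_, ?_,
    fun _ => hc, fun i _ => pIter_get_succ_mem _, fun _ => ?_⟩
  · exact hg.eq_of_mem_pIter_of_not_mem_pRan hc ((Part.get_eq_iff_mem _).1 h)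
      (Part.get_mem _)
  · rw [hg.pOrbit_eq_of_not_mem_pRan hc ha]
    ext b
    refine ⟨fun ⟨n, hb⟩ => ?_, fun ⟨i, hi⟩ => ⟨i, hi ▸ Part.get_mem _⟩⟩
    exact ⟨⟨n, Nat.lt_succ_of_le (le_of_mem_pIter_of_not_dom ht htd hb)⟩,
      Part.get_eq_of_mem hb _⟩
  · simpa [Part.get_eq_of_mem ht] using htd

theorem IsPartialInjection.isOmegaChain_pOrbit (hc : c ∉ pRan g)
    (hdom : ∀ n, (pIter g n c).Dom) (ha : a ∈ pIter g j c) : IsOmegaChain g (pOrbit g a) := by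
  refine ⟨fun n => (pIter g n c).get (hdom n), fun i i' h => ?_, ?_, hc,
    fun n => pIter_get_succ_mem _⟩
  · exact hg.eq_of_mem_pIter_of_not_mem_pRan hc ((Part.get_eq_iff_mem _).1 h)
      (Part.get_mem _)
  · rw [hg.pOrbit_eq_of_not_mem_pRan hc ha]
    ext b
    exact ⟨fun ⟨n, hb⟩ => ⟨n, Part.get_eq_of_mem hb _⟩,
      fun ⟨n, hn⟩ => ⟨n, hn ▸ Part.get_mem _⟩⟩

end PartialInjection

noncomputable def pInv {A : Type*} (f : A →. A) : A →. A :=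
  fun y => ⟨y ∈ pRan f, Classical.choose⟩

section Inverse

variable {A : Type*} {f : A →. A} {a x y : A} {n : ℕ}

theorem mem_of_mem_pInv (h : x ∈ pInv f y) : y ∈ f x := by
  obtain ⟨hy, rfl⟩ := h
  exact Classical.choose_spec hy

theorem isPartialInjection_pInv (f : A →. A) : IsPartialInjection (pInv f) :=
  fun _ _ _ hx hy => Part.mem_unique (mem_of_mem_pInv hx) (mem_of_mem_pInv hy)

variable (hf : IsPartialInjection f)
include hf

theorem IsPartialInjection.mem_pInv : x ∈ pInv f y ↔ y ∈ f x :=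
  ⟨mem_of_mem_pInv, fun h =>
    ⟨⟨x, h⟩, hf _ _ _ (Classical.choose_spec (⟨x, h⟩ : y ∈ pRan f)) h⟩⟩

theorem IsPartialInjection.mem_pIter_pInv : x ∈ pIter (pInv f) n y ↔ y ∈ pIter f n x := by
  induction n generalizing x with
  | zero => simp [eq_comm]
  | succ n ih =>
    rw [mem_pIter_succ, mem_pIter_succ']
    simp only [ih, hf.mem_pInv, and_comm]

theorem IsPartialInjection.mem_pRan_pInv : y ∈ pRan (pInv f) ↔ (f y).Dom := by
  simp only [pRan, Set.mem_ofPred_eq, hf.mem_pInv, Part.dom_iff_mem]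

theorem IsPartialInjection.pOrbit_pInv : pOrbit (pInv f) a = pOrbit f a := by
  ext b
  simp only [pOrbit, Set.mem_ofPred_eq, hf.mem_pIter_pInv, or_comm]

theorem IsPartialInjection.isOmegaStarChain_of_pInv {S : Set A}
    (h : IsOmegaChain (pInv f) S) : IsOmegaStarChain f S := by
  obtain ⟨u, hu, hS, h0, hstep⟩ := h
  exact ⟨u, hu, hS, mt hf.mem_pRan_pInv.2 h0, fun n => hf.mem_pInv.1 (hstep n)⟩

end Inverse

section IntPath

variable {A : Type*} {g : A →. A} {e : ℤ → A} {i j : ℤ}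

theorem exists_int_path {u v : ℕ → A} (hu : ∀ n, u (n + 1) ∈ g (u n))
    (hv : ∀ n, v n ∈ g (v (n + 1))) (h0 : u 0 = v 0) :
    ∃ e : ℤ → A, e 0 = u 0 ∧ ∀ z, e (z + 1) ∈ g (e z) := by
  refine ⟨fun z => Int.rec u (fun n => v (n + 1)) z, rfl, ?_⟩
  intro z
  rcases z with n | _ | n
  · exact hu n
  · show u 0 ∈ g (v 1)
    exact h0 ▸ hv 0
  · exact hv (n + 1)

variable (he : ∀ z, e (z + 1) ∈ g (e z))
include he

theorem mem_pIter_of_int_path (z : ℤ) (n : ℕ) : e (z + n) ∈ pIter g n (e z) := by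
  induction n with
  | zero => simp
  | succ n ih =>
    exact mem_pIter_succ.2 ⟨_, ih, by rw [Nat.cast_succ, ← add_assoc]; exact he _⟩

theorem IsPartialInjection.int_path_eq_add (hg : IsPartialInjection g) (h : e i = e j) (n : ℤ) :
    e (i + n) = e (j + n) := by
  refine Int.induction_on n (by simpa) (fun n ih => ?_) (fun n ih => ?_)
  · rw [← add_assoc, ← add_assoc]
    exact Part.mem_unique (he _) (ih ▸ he _)
  · have hi := he (i + (-n - 1))
    have hj := he (j + (-n - 1))
    rw [show i + (-n - 1) + 1 = i + -n by ring, ih] at hi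
    rw [show j + (-n - 1) + 1 = j + -n by ring] at hj
    exact hg _ _ _ hi hj

theorem IsPartialInjection.isZChain_pOrbit (hg : IsPartialInjection g)
    (hnp : ∀ n, 0 < n → e 0 ∉ pIter g n (e 0)) : IsZChain g (pOrbit g (e 0)) := by
  have hinj : Function.Injective e := by
    intro i j h
    by_contra hij
    wlog hlt : i < j generalizing i j
    · exact this h.symm (Ne.symm hij) (by omega)
    have h0 : e 0 = e (j - i) := by
      simpa [sub_eq_add_neg] using hg.int_path_eq_add he h (-i)
    apply hnp (j - i).toNat (by omega)
    have := mem_pIter_of_int_path he 0 (j - i).toNat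
    rwa [Int.toNat_of_nonneg (by omega), zero_add, ← h0] at this
  have hrange : Set.range e = pOrbit g (e 0) := by
    ext b
    constructor
    · rintro ⟨z, rfl⟩
      obtain ⟨n, rfl | rfl⟩ := Int.eq_nat_or_neg z
      · exact ⟨n, .inl (by simpa using mem_pIter_of_int_path he 0 n)⟩
      · exact ⟨n, .inr (by simpa using mem_pIter_of_int_path he (-n) n)⟩
    · rintro ⟨n, hb | hb⟩
      · exact ⟨n, Part.mem_unique (by simpa using mem_pIter_of_int_path he 0 n) hb⟩
      · exact ⟨-n, hg.eq_of_mem_pIter (by simpa using mem_pIter_of_int_path he (-n) n) hb⟩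
  exact ⟨hrange ▸ Set.infinite_range_of_injective hinj, e, hinj, hrange, he⟩

end IntPath

section Signature

variable {A : Type*} {f : A →. A} {S : Set A} {k : ℕ}

open Classical in
noncomputable def orbitSignature (f : A →. A) (S : Set A) : Bool × Bool × Bool :=
  (decide S.Finite, decide (∃ c ∈ S, c ∉ pRan f), decide (∃ t ∈ S, ¬(f t).Dom))

theorem IsKCycle.orbitSignature_eq (h : IsKCycle f k S) :
    orbitSignature f S = (true, false, false) := by
  obtain ⟨hk, x, -, hx, -, rfl⟩ := h
  have hdom (i : Fin k) : (pIter f i x).Dom :=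
    pIter_dom_of_le (Part.dom_iff_mem.2 ⟨x, hx⟩) i.2.le
  simp only [orbitSignature, Prod.mk.injEq, decide_eq_true_iff, decide_eq_false_iff_not,
    not_exists, not_and, not_not]
  refine ⟨(Set.finite_range fun i : Fin k => (pIter f i x).get (hdom i)).subset ?_, ?_, ?_⟩
  · rintro y ⟨i, hi, hy⟩
    exact ⟨⟨i, hi⟩, Part.get_eq_of_mem hy _⟩
  · exact fun y ⟨i, _, hy⟩ =>
      mem_pRan_of_mem_pIter (mem_pIter_add.2 ⟨x, hx, hy⟩) (by omega)
  · exact fun y ⟨i, hi, hy⟩ => dom_of_mem_pIter (mem_pIter_sub_of_mem hy hx hi.le) (by omega)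

theorem IsKChain.orbitSignature_eq (h : IsKChain f k S) :
    orbitSignature f S = (true, true, true) := by
  obtain ⟨hk, x, -, rfl, hfirst, -, hlast⟩ := h
  simp only [orbitSignature, Prod.mk.injEq, decide_eq_true_iff]
  exact ⟨Set.finite_range x, ⟨_, ⟨_, rfl⟩, hfirst hk⟩, ⟨_, ⟨_, rfl⟩, hlast hk⟩⟩

theorem IsZChain.orbitSignature_eq (h : IsZChain f S) :
    orbitSignature f S = (false, false, false) := by
  obtain ⟨hinf, e, -, rfl, he⟩ := h
  simp only [orbitSignature, Prod.mk.injEq, decide_eq_false_iff_not, not_exists, not_and, not_not,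
    Set.forall_mem_range]
  refine ⟨hinf, fun z => ⟨e (z - 1), ?_⟩, fun z => Part.dom_iff_mem.2 ⟨_, he z⟩⟩
  simpa using he (z - 1)

theorem IsOmegaChain.orbitSignature_eq (h : IsOmegaChain f S) :
    orbitSignature f S = (false, true, false) := by
  obtain ⟨u, hu, rfl, h0, hstep⟩ := h
  simp only [orbitSignature, Prod.mk.injEq, decide_eq_false_iff_not, decide_eq_true_iff,
    not_exists, not_and, not_not, Set.forall_mem_range]
  exact ⟨Set.infinite_range_of_injective hu, ⟨_, ⟨0, rfl⟩, h0⟩,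
    fun n => Part.dom_iff_mem.2 ⟨_, hstep n⟩⟩

theorem IsOmegaStarChain.orbitSignature_eq (h : IsOmegaStarChain f S) :
    orbitSignature f S = (false, false, true) := by
  obtain ⟨u, hu, rfl, h0, hstep⟩ := h
  simp only [orbitSignature, Prod.mk.injEq, decide_eq_false_iff_not, decide_eq_true_iff,
    not_exists, not_and, not_not, Set.forall_mem_range]
  exact ⟨Set.infinite_range_of_injective hu, fun n => ⟨_, hstep n⟩,
    ⟨_, ⟨0, rfl⟩, h0⟩⟩

def IsOrbitType (f : A →. A) (S : Set A) : Fin 5 → Prop :=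
  ![∃ k, IsKCycle f k S, ∃ k, IsKChain f k S, IsZChain f S, IsOmegaChain f S,
    IsOmegaStarChain f S]

def orbitTypeSignature : Fin 5 → Bool × Bool × Bool :=
  ![(true, false, false), (true, true, true), (false, false, false), (false, true, false),
    (false, false, true)]

theorem orbitTypeSignature_injective : Function.Injective orbitTypeSignature := by
  decide

theorem IsOrbitType.orbitSignature_eq {i : Fin 5} (h : IsOrbitType f S i) :
    orbitSignature f S = orbitTypeSignature i := by
  fin_cases i
  · obtain ⟨k, hk⟩ := h
    exact hk.orbitSignature_eq
  · obtain ⟨k, hk⟩ := h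
    exact hk.orbitSignature_eq
  · exact IsZChain.orbitSignature_eq h
  · exact IsOmegaChain.orbitSignature_eq h
  · exact IsOmegaStarChain.orbitSignature_eq h

theorem IsOrbitType.unique {i j : Fin 5} (hi : IsOrbitType f S i) (hj : IsOrbitType f S j) :
    i = j :=
  orbitTypeSignature_injective (hi.orbitSignature_eq.symm.trans hj.orbitSignature_eq)

end Signature

theorem IsPartialInjection.exists_isOrbitType {A : Type*} {f : A →. A}
    (hf : IsPartialInjection f) (a : A) : ∃ i, IsOrbitType f (pOrbit f a) i := by
  by_cases hper : ∃ k, 0 < k ∧ a ∈ pIter f k a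
  · exact ⟨0, hf.isKCycle_pOrbit hper⟩
  push Not at hper
  rcases exists_not_dom_or_forall_pIter_dom (pInv f) a with ⟨c, m, hca, hc⟩ | hback <;>
    rcases exists_not_dom_or_forall_pIter_dom f a with ⟨t, n, hta, ht⟩ | hfwd
  · rw [hf.mem_pIter_pInv] at hca
    exact ⟨1, _, hf.isKChain_pOrbit hc (mem_pIter_add.2 ⟨a, hca, hta⟩) ht hca⟩
  · rw [hf.mem_pIter_pInv] at hca
    exact ⟨3, hf.isOmegaChain_pOrbit hc (forall_pIter_dom_of_mem hca hfwd) hca⟩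
  · rw [← hf.mem_pIter_pInv] at hta
    have := (isPartialInjection_pInv f).isOmegaChain_pOrbit (mt hf.mem_pRan_pInv.1 ht)
      (forall_pIter_dom_of_mem hta hback) hta
    exact ⟨4, hf.isOmegaStarChain_of_pInv (hf.pOrbit_pInv ▸ this)⟩
  · obtain ⟨e, he0, he⟩ := exists_int_path (fun n => pIter_get_succ_mem (hfwd (n + 1)))
      (fun n => hf.mem_pInv.1 (pIter_get_succ_mem (hback (n + 1)))) rfl
    replace he0 : e 0 = a := he0
    subst he0
    exact ⟨2, hf.isZChain_pOrbit he hper⟩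

theorem partial_injection_orbit_classification {A : Type*} (f : A →. A)
    (hinj : ∀ x y z : A, z ∈ f x → z ∈ f y → x = y) (a : A) :
    ∃! i : Fin 5,
      ![∃ k, IsKCycle f k (pOrbit f a),
        ∃ k, IsKChain f k (pOrbit f a),
        IsZChain f (pOrbit f a),
        IsOmegaChain f (pOrbit f a),
        IsOmegaStarChain f (pOrbit f a)] i := by
  obtain ⟨i, hi⟩ := IsPartialInjection.exists_isOrbitType hinj a
  exact ⟨i, hi, fun j hj => IsOrbitType.unique hj hi⟩
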